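/- (Hahn property, continuous case.) Let q ∈ ℂ[z] with q(0) = 0, let P_n = Σ_{j=0}^n q(G)^j(x^n)/j! with G = R(H)∘∂, and let Ĝ = R(H+1)∘∂ = ρ·∏_{k=1}^d (H + α_k + 2)∘∂. Define Q_m = Σ_{j=0}^m q(Ĝ)^j(x^m)/j!. Then for every n ≥ 1, the derivative satisfies ∂P_n = n·Q_{n−1}; i.e., the polynomial system of derivatives P_n′/n coincides with the system of the same class built from Ĝ. -/
import Mathlib

open Polynomial

/-- Pochhammer symbol `(a)_j = a(a+1)⋯(a+j−1)`. -/
noncomputable def poch (a : ℂ) (j : ℕ) : ℂ := ∏ s ∈ Finset.range j, (a + s)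

/-- The derivative operator `∂` on `ℂ[x]`. -/
noncomputable def Dop : Module.End ℂ (Polynomial ℂ) := Polynomial.derivative

/-- Multiplication by `x` on `ℂ[x]`. -/
noncomputable def Xop : Module.End ℂ (Polynomial ℂ) := LinearMap.mulLeft ℂ Polynomial.X

/-- `H = x∂`. -/
noncomputable def Hop : Module.End ℂ (Polynomial ℂ) := Xop * Dop

/-- `G = R(H)∘∂` with `R(H) = ρ·∏_{k=1}^d (H + α_k + 1)`. -/
noncomputable def Gop (d : ℕ) (α : ℕ → ℂ) (ρ : ℂ) : Module.End ℂ (Polynomial ℂ) :=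
  (Polynomial.aeval Hop
    (Polynomial.C ρ * ∏ k ∈ Finset.range d, (Polynomial.X + Polynomial.C (α k + 1)))) * Dop

/-- `Ĝ = R(H+1)∘∂ = ρ·∏_{k=1}^d (H + α_k + 2)∘∂`. -/
noncomputable def Gophat (d : ℕ) (α : ℕ → ℂ) (ρ : ℂ) : Module.End ℂ (Polynomial ℂ) :=
  (Polynomial.aeval Hop
    (Polynomial.C ρ * ∏ k ∈ Finset.range d, (Polynomial.X + Polynomial.C (α k + 2)))) * Dop

-- auxiliary lemmas

lemma wb_lt_succ {a : WithBot ℕ} {m : ℕ} : a < ((m : ℕ) + 1 : ℕ) ↔ a ≤ (m : ℕ) := by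
  cases a with
  | bot => simpa using WithBot.bot_lt_coe (m + 1)
  | coe n =>
    rw [Nat.cast_withBot, Nat.cast_withBot, WithBot.coe_lt_coe, WithBot.coe_le_coe]
    exact Nat.lt_succ_iff

lemma Dop_apply (p : Polynomial ℂ) : Dop p = Polynomial.derivative p := rfl

lemma Dlow {p : Polynomial ℂ} {m : ℕ} (h : p.degree < ((m : ℕ) + 1 : ℕ)) :
    (Dop p).degree < (m : ℕ) := by
  rcases eq_or_ne p 0 with rfl | hp
  · simp [Dop]
  · have h1 := Polynomial.degree_derivative_lt hp
    have h2 : p.degree ≤ (m : ℕ) := wb_lt_succ.mp h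
    exact lt_of_lt_of_le h1 h2

lemma Hpres {p : Polynomial ℂ} {m : ℕ} (h : p.degree < (m : ℕ)) :
    (Hop p).degree < (m : ℕ) := by
  cases m with
  | zero =>
    have : p = 0 := by
      rw [Polynomial.degree_eq_bot.symm] at *
      simpa using h
    simp [this, Hop, Xop, Dop]
  | succ m =>
    have hd : (Dop p).degree < (m : ℕ) := Dlow h
    have : Hop p = Polynomial.X * Dop p := rfl
    rw [this]
    calc (Polynomial.X * Dop p).degree ≤ 1 + (Dop p).degree := by
          simpa using Polynomial.degree_mul_le Polynomial.X (Dop p)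
      _ < 1 + (m : ℕ) := by
          apply WithBot.add_lt_add_left (by simp) hd
      _ = ((m : ℕ) + 1 : ℕ) := by push_cast; ring

lemma aeval_pres (A : Module.End ℂ (Polynomial ℂ))
    (hA : ∀ {p : Polynomial ℂ} {m : ℕ}, p.degree < (m : ℕ) → (A p).degree < (m : ℕ))
    (r : Polynomial ℂ) {p : Polynomial ℂ} {m : ℕ} (h : p.degree < (m : ℕ)) :
    ((Polynomial.aeval A r) p).degree < (m : ℕ) := by
  induction r using Polynomial.induction_on generalizing p with
  | C a =>
    simp only [Polynomial.aeval_C]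
    have : (algebraMap ℂ (Module.End ℂ (Polynomial ℂ)) a) p = a • p := rfl
    rw [this]
    exact lt_of_le_of_lt (Polynomial.degree_smul_le a p) h
  | add r s hr hs =>
    simp only [map_add, LinearMap.add_apply]
    exact lt_of_le_of_lt (Polynomial.degree_add_le _ _) (max_lt (hr h) (hs h))
  | monomial n a hr =>
    have : (Polynomial.aeval A (Polynomial.C a * Polynomial.X ^ (n + 1))) p
        = (Polynomial.aeval A (Polynomial.C a * Polynomial.X ^ n)) (A p) := by
      simp [pow_succ, map_mul, Module.End.mul_apply]
    rw [this]
    exact hr (hA h)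

lemma Glow (d : ℕ) (α : ℕ → ℂ) (ρ : ℂ) {p : Polynomial ℂ} {m : ℕ}
    (h : p.degree < ((m : ℕ) + 1 : ℕ)) :
    ((Gophat d α ρ) p).degree < (m : ℕ) := by
  have : (Gophat d α ρ) p = (Polynomial.aeval Hop
    (Polynomial.C ρ * ∏ k ∈ Finset.range d, (Polynomial.X + Polynomial.C (α k + 2)))) (Dop p) :=
    rfl
  rw [this]
  exact aeval_pres Hop (fun h => Hpres h) _ (Dlow h)

lemma Gpres (d : ℕ) (α : ℕ → ℂ) (ρ : ℂ) {p : Polynomial ℂ} {m : ℕ}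
    (h : p.degree < (m : ℕ)) : ((Gophat d α ρ) p).degree < (m : ℕ) := by
  cases m with
  | zero =>
    have hp : p = 0 := by
      rw [Polynomial.degree_eq_bot.symm] at *
      simpa using h
    simpa [hp] using h
  | succ m =>
    have := Glow d α ρ (p := p) (m := m) (by exact_mod_cast h)
    refine lt_trans this ?_
    exact_mod_cast Nat.lt_succ_self m

lemma qG_low (d : ℕ) (α : ℕ → ℂ) (ρ : ℂ) (q : Polynomial ℂ) (hq : q.eval 0 = 0)
    {p : Polynomial ℂ} {m : ℕ} (h : p.degree < ((m : ℕ) + 1 : ℕ)) :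
    ((Polynomial.aeval (Gophat d α ρ) q) p).degree < (m : ℕ) := by
  obtain ⟨q₁, hq₁⟩ : Polynomial.X ∣ q := Polynomial.X_dvd_iff.mpr
    (by rw [Polynomial.coeff_zero_eq_eval_zero]; exact hq)
  have : (Polynomial.aeval (Gophat d α ρ) q) p
      = (Polynomial.aeval (Gophat d α ρ) q₁) ((Gophat d α ρ) p) := by
    rw [hq₁, mul_comm, map_mul]
    simp [Module.End.mul_apply]
  rw [this]
  exact aeval_pres _ (fun h => Gpres d α ρ h) _ (Glow d α ρ h)

lemma qG_pow_zero (d : ℕ) (α : ℕ → ℂ) (ρ : ℂ) (q : Polynomial ℂ) (hq : q.eval 0 = 0) :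
    ∀ (j : ℕ) (p : Polynomial ℂ), p.degree < (j : ℕ) →
      ((Polynomial.aeval (Gophat d α ρ) q) ^ j) p = 0 := by
  intro j
  induction j with
  | zero =>
    intro p hp
    have : p = 0 := by
      rw [Polynomial.degree_eq_bot.symm] at *
      simpa using hp
    simp [this]
  | succ j ih =>
    intro p hp
    rw [pow_succ, Module.End.mul_apply]
    exact ih _ (qG_low d α ρ q hq (by exact_mod_cast hp))

-- commutation lemmas

lemma DH : Dop * Hop = Hop * Dop + Dop := by
  apply LinearMap.ext
  intro p
  simp [Dop, Hop, Xop, Module.End.mul_apply, Polynomial.derivative_mul]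
  ring

lemma D_aevalH (r : Polynomial ℂ) :
    Dop * Polynomial.aeval Hop r
      = Polynomial.aeval Hop (r.comp (Polynomial.X + 1)) * Dop := by
  induction r using Polynomial.induction_on with
  | C a =>
    simp only [Polynomial.C_comp, Polynomial.aeval_C]
    exact (Algebra.commutes a Dop).symm
  | add r s hr hs =>
    simp only [Polynomial.add_comp, map_add, add_mul, mul_add, hr, hs]
  | monomial n a hr =>
    have h1 : (Polynomial.C a * Polynomial.X ^ (n + 1)).comp (Polynomial.X + 1)
        = (Polynomial.C a * Polynomial.X ^ n).comp (Polynomial.X + 1) * (Polynomial.X + 1) := by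
      simp [Polynomial.mul_comp, Polynomial.pow_comp, pow_succ, mul_assoc]
    have h2 : Polynomial.aeval Hop (Polynomial.C a * Polynomial.X ^ (n + 1))
        = Polynomial.aeval Hop (Polynomial.C a * Polynomial.X ^ n) * Hop := by
      simp [map_mul, pow_succ, mul_assoc]
    have h3 : Polynomial.aeval Hop ((Polynomial.X + 1 : Polynomial ℂ)) = Hop + 1 := by
      rw [map_add, Polynomial.aeval_X, Polynomial.aeval_one]
    have h4 : Dop * Hop = (Hop + 1) * Dop := by rw [DH, add_mul, one_mul]
    have h5 : Polynomial.aeval Hop ((Polynomial.C a * Polynomial.X ^ n).comp (Polynomial.X + 1)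
          * (Polynomial.X + 1))
        = Polynomial.aeval Hop ((Polynomial.C a * Polynomial.X ^ n).comp (Polynomial.X + 1))
          * (Hop + 1) := by
      rw [map_mul, h3]
    rw [h2, h1, h5, ← mul_assoc, hr, mul_assoc, h4, ← mul_assoc]

lemma Rcomp (d : ℕ) (α : ℕ → ℂ) (ρ : ℂ) :
    ((Polynomial.C ρ * ∏ k ∈ Finset.range d,
        (Polynomial.X + Polynomial.C (α k + 1))).comp (Polynomial.X + 1))
      = Polynomial.C ρ * ∏ k ∈ Finset.range d, (Polynomial.X + Polynomial.C (α k + 2)) := by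
  rw [Polynomial.mul_comp, Polynomial.C_comp, Polynomial.prod_comp]
  congr 1
  apply Finset.prod_congr rfl
  intro k _
  simp [Polynomial.add_comp, Polynomial.C_add, map_ofNat]
  ring

lemma DG (d : ℕ) (α : ℕ → ℂ) (ρ : ℂ) :
    Dop * Gop d α ρ = Gophat d α ρ * Dop := by
  unfold Gop Gophat
  rw [← mul_assoc, D_aevalH, Rcomp]

lemma D_aevalG (d : ℕ) (α : ℕ → ℂ) (ρ : ℂ) (r : Polynomial ℂ) :
    Dop * Polynomial.aeval (Gop d α ρ) r = Polynomial.aeval (Gophat d α ρ) r * Dop := by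
  induction r using Polynomial.induction_on with
  | C a =>
    simp only [Polynomial.aeval_C]
    exact (Algebra.commutes a Dop).symm
  | add r s hr hs =>
    simp only [map_add, add_mul, mul_add, hr, hs]
  | monomial n a hr =>
    have h2 : ∀ (A : Module.End ℂ (Polynomial ℂ)),
        Polynomial.aeval A (Polynomial.C a * Polynomial.X ^ (n + 1))
        = Polynomial.aeval A (Polynomial.C a * Polynomial.X ^ n) * A := by
      intro A; simp [map_mul, pow_succ, mul_assoc]
    rw [h2, h2, ← mul_assoc, hr, mul_assoc, DG d α ρ, ← mul_assoc]

/-- Hahn property (continuous case): `∂P_n = n·Q_{n−1}` where `Q` is the system built from `Ĝ`. -/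
theorem stmt5 (d : ℕ) (α : ℕ → ℂ) (ρ : ℂ) (hρ : ρ ≠ 0)
    (q : Polynomial ℂ) (hq : q.eval 0 = 0) :
    let P : ℕ → Polynomial ℂ := fun n => ∑ j ∈ Finset.range (n + 1),
      ((j.factorial : ℂ))⁻¹ • ((Polynomial.aeval (Gop d α ρ) q) ^ j) (Polynomial.X ^ n)
    let Q : ℕ → Polynomial ℂ := fun m => ∑ j ∈ Finset.range (m + 1),
      ((j.factorial : ℂ))⁻¹ • ((Polynomial.aeval (Gophat d α ρ) q) ^ j) (Polynomial.X ^ m)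
    ∀ n : ℕ, 1 ≤ n → Polynomial.derivative (P n) = (n : ℂ) • Q (n - 1) := by
  intro P Q n hn
  obtain ⟨m, rfl⟩ : ∃ m, n = m + 1 := ⟨n - 1, (Nat.succ_pred_eq_of_pos hn).symm⟩
  have key : ∀ j : ℕ, Dop (((Polynomial.aeval (Gop d α ρ) q) ^ j) (Polynomial.X ^ (m + 1)))
      = ((m : ℂ) + 1) • ((Polynomial.aeval (Gophat d α ρ) q) ^ j) (Polynomial.X ^ m) := by
    intro j
    have h1 : Dop * (Polynomial.aeval (Gop d α ρ) q) ^ j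
        = (Polynomial.aeval (Gophat d α ρ) q) ^ j * Dop := by
      rw [← map_pow, ← map_pow]
      exact D_aevalG d α ρ (q ^ j)
    have h2 : Dop ((((Polynomial.aeval (Gop d α ρ) q) ^ j)) (Polynomial.X ^ (m + 1)))
        = ((Polynomial.aeval (Gophat d α ρ) q) ^ j) (Dop (Polynomial.X ^ (m + 1))) := by
      have := congrArg (fun (T : Module.End ℂ (Polynomial ℂ)) => T (Polynomial.X ^ (m + 1))) h1
      simpa [Module.End.mul_apply] using this
    rw [h2]
    have h3 : Dop (Polynomial.X ^ (m + 1)) = ((m : ℂ) + 1) • (Polynomial.X ^ m : Polynomial ℂ) := by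
      rw [Dop_apply, Polynomial.derivative_X_pow, Polynomial.smul_eq_C_mul]
      norm_cast
    rw [h3, map_smul]
  have hP : Polynomial.derivative (P (m + 1)) = Dop (P (m + 1)) := rfl
  rw [hP]
  show Dop (∑ j ∈ Finset.range (m + 1 + 1),
      ((j.factorial : ℂ))⁻¹ • ((Polynomial.aeval (Gop d α ρ) q) ^ j) (Polynomial.X ^ (m + 1)))
    = ((m + 1 : ℕ) : ℂ) • Q (m + 1 - 1)
  rw [map_sum]
  simp only [map_smul, key]
  rw [Finset.sum_range_succ]
  have hzero : ((Polynomial.aeval (Gophat d α ρ) q) ^ (m + 1)) (Polynomial.X ^ m) = 0 := by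
    apply qG_pow_zero d α ρ q hq
    rw [Polynomial.degree_X_pow]
    exact_mod_cast Nat.lt_succ_self m
  rw [hzero]
  simp only [smul_zero, add_zero]
  have hQ : Q (m + 1 - 1) = ∑ j ∈ Finset.range (m + 1),
      ((j.factorial : ℂ))⁻¹ • ((Polynomial.aeval (Gophat d α ρ) q) ^ j) (Polynomial.X ^ m) := by
    simp [Q]
  rw [hQ, Finset.smul_sum]
  apply Finset.sum_congr rfl
  intro j _
  rw [smul_comm]
  congr 1
  push_cast
  ring
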